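/- Fix θ > 0, y > 0, k ≥ 1, and for m > 0 define Λ(u) = ln(θ/u) − (1/u − 1/θ)·m. Consider g(u) = (ln(θ/u) − y/k)/(1/u − 1/θ) for u ≠ θ. Then g has a maximum θ⁺ on (0,θ) and a minimum θ⁻ on (θ,∞), and for a random m̂, with Λ defined using m = m̂, the event {k·Λ(m̂) > y} is contained in {k·Λ(θ⁺) > y} ∪ {k·Λ(θ⁻) > y}. -/
import Mathlib

set_option maxHeartbeats 1000000 in
/-- Peeling argument: for fixed `θ > 0`, `y > 0`, `k ≥ 1`, with
`Λ_m(u) = ln(θ/u) - (1/u - 1/θ) m` and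
`g(u) = (ln(θ/u) - y/k)/(1/u - 1/θ)`, the function `g` attains a maximum
`θ⁺` on `(0,θ)` and a minimum `θ⁻` on `(θ,∞)`, and for any `m̂ > 0` the event
`{k Λ_{m̂}(m̂) > y}` is contained in
`{k Λ_{m̂}(θ⁺) > y} ∪ {k Λ_{m̂}(θ⁻) > y}`. -/
theorem peeling_argument (θ y k : ℝ) (hθ : 0 < θ) (hy : 0 < y) (hk : 1 ≤ k) :
    ∃ θp ∈ Set.Ioo (0 : ℝ) θ, ∃ θm ∈ Set.Ioi θ,
      IsMaxOn (fun u : ℝ => (Real.log (θ / u) - y / k) / (1 / u - 1 / θ))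
        (Set.Ioo 0 θ) θp ∧
      IsMinOn (fun u : ℝ => (Real.log (θ / u) - y / k) / (1 / u - 1 / θ))
        (Set.Ioi θ) θm ∧
      ∀ m : ℝ, 0 < m →
        k * (Real.log (θ / m) - (1 / m - 1 / θ) * m) > y →
          k * (Real.log (θ / θp) - (1 / θp - 1 / θ) * m) > y ∨
          k * (Real.log (θ / θm) - (1 / θm - 1 / θ) * m) > y := by
  have hk0 : (0:ℝ) < k := lt_of_lt_of_le one_pos hk
  set c := y / k with hcdef
  have hc : 0 < c := div_pos hy hk0
  clear_value c
  set g : ℝ → ℝ := fun u : ℝ => (Real.log (θ / u) - c) / (1 / u - 1 / θ) with hgdef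
  clear_value g
  -- denominator nonzero
  have hden : ∀ x : ℝ, 0 < x → x ≠ θ → 1 / x - 1 / θ ≠ 0 := by
    intro x hx hxθ h
    apply hxθ
    have h2 : (1:ℝ) / x = 1 / θ := by linarith
    rw [one_div, one_div] at h2
    exact inv_injective h2
  -- continuity
  have hgc : ∀ x : ℝ, 0 < x → x ≠ θ → ContinuousAt g x := by
    intro x hx hxθ
    rw [hgdef]
    have hdiv : ContinuousAt (fun u : ℝ => θ / u) x :=
      continuousAt_const.div continuousAt_id hx.ne'
    have h1 : ContinuousAt (fun u : ℝ => Real.log (θ / u) - c) x :=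
      ((Real.continuousAt_log (by positivity)).comp hdiv).sub continuousAt_const
    have h2 : ContinuousAt (fun u : ℝ => 1 / u - 1 / θ) x :=
      (continuousAt_const.div continuousAt_id hx.ne').sub continuousAt_const
    exact h1.div h2 (hden x hx hxθ)
  ------------------------------------------------------------------
  -- MAXIMUM on (0, θ)
  ------------------------------------------------------------------
  set a := θ * Real.exp (-(2*c)) with hadef
  have ha0 : 0 < a := by positivity
  have haθ : a < θ := by
    have h1 : Real.exp (-(2*c)) < 1 := Real.exp_lt_one_iff.mpr (by linarith)
    calc a < θ * 1 := mul_lt_mul_of_pos_left h1 hθ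
      _ = θ := mul_one θ
  have hga : g a = c / (1 / a - 1 / θ) := by
    have h1 : θ / a = Real.exp (2*c) := by
      rw [hadef, Real.exp_neg]
      field_simp
    simp only [hgdef, h1, Real.log_exp]
    ring_nf
  have hdena : 0 < 1 / a - 1 / θ := by
    have := one_div_lt_one_div_of_lt ha0 haθ
    linarith
  set A := g a with hAdef
  have hA : 0 < A := hga ▸ div_pos hc hdena
  set b := θ * Real.exp (-c) with hbdef
  have hb0 : 0 < b := by positivity
  have hbθ : b < θ := by
    have h1 : Real.exp (-c) < 1 := Real.exp_lt_one_iff.mpr (by linarith)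
    calc b < θ * 1 := mul_lt_mul_of_pos_left h1 hθ
      _ = θ := mul_one θ
  have hab : a < b := by
    apply mul_lt_mul_of_pos_left _ hθ
    exact Real.exp_lt_exp.mpr (by linarith)
  have hbθexp : θ = Real.exp c * b := by rw [hbdef, Real.exp_neg]; field_simp
  set ε := min (θ/2) (min a (A^2/(32*θ))) with hεdef
  have hε0 : 0 < ε := lt_min (by positivity) (lt_min ha0 (by positivity))
  have hεa : ε ≤ a := le_trans (min_le_right _ _) (min_le_left _ _)
  have hεhalf : ε ≤ θ/2 := min_le_left _ _
  have hεA : ε ≤ A^2/(32*θ) := le_trans (min_le_right _ _) (min_le_right _ _)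
  have hεb : ε ≤ b := hεa.trans hab.le
  clear_value A a b ε
  -- compact max
  obtain ⟨θp, hθpC, hmaxC⟩ : ∃ x ∈ Set.Icc ε b, IsMaxOn g (Set.Icc ε b) x := by
    apply isCompact_Icc.exists_isMaxOn ⟨ε, le_refl _, hεb⟩
    intro x hx
    exact (hgc x (lt_of_lt_of_le hε0 hx.1) (ne_of_lt (lt_of_le_of_lt hx.2 hbθ))).continuousWithinAt
  have hθpIoo : θp ∈ Set.Ioo (0:ℝ) θ :=
    ⟨lt_of_lt_of_le hε0 hθpC.1, lt_of_le_of_lt hθpC.2 hbθ⟩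
  have haC : a ∈ Set.Icc ε b := ⟨hεa, hab.le⟩
  have hApθ : A ≤ g θp := by rw [hAdef]; exact hmaxC haC
  -- small-u bound : for 0 < u < ε, g u < A
  have hsmall : ∀ u : ℝ, 0 < u → u < ε → g u < A := by
    intro u hu huε
    have huθ : u < θ := by linarith
    have hD : 0 < 1 / u - 1 / θ := by
      have := one_div_lt_one_div_of_lt hu huθ
      linarith
    rw [hgdef]
    by_cases hN : Real.log (θ / u) - c ≤ 0
    · calc (Real.log (θ/u) - c)/(1/u - 1/θ) ≤ 0 := div_nonpos_of_nonpos_of_nonneg hN hD.le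
        _ < A := hA
    · push_neg at hN
      have huθ2 : u ≤ θ/2 := le_trans huε.le hεhalf
      have hDlb : 1/(2*u) ≤ 1/u - 1/θ := by
        have h1 : 1/θ ≤ 1/(2*u) :=
          one_div_le_one_div_of_le (by positivity) (by linarith)
        have h2 : (1:ℝ)/u - 1/(2*u) = 1/(2*u) := by field_simp; ring
        linarith
      have hstep1 : (Real.log (θ/u) - c)/(1/u - 1/θ) ≤ (Real.log (θ/u) - c) * (2*u) := by
        have h3 := div_le_div_of_nonneg_left (le_of_lt hN) (by positivity : (0:ℝ) < 1/(2*u)) hDlb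
        calc (Real.log (θ/u) - c)/(1/u - 1/θ) ≤ (Real.log (θ/u) - c) / (1/(2*u)) := h3
          _ = (Real.log (θ/u) - c) * (2*u) := by field_simp
      have hlog : Real.log (θ/u) ≤ 2 * Real.sqrt (θ/u) := by
        have h1 : Real.log (Real.sqrt (θ/u)) = Real.log (θ/u) / 2 := Real.log_sqrt (by positivity)
        have h2 : Real.log (Real.sqrt (θ/u)) ≤ Real.sqrt (θ/u) - 1 :=
          Real.log_le_sub_one_of_pos (Real.sqrt_pos.mpr (by positivity))
        linarith
      have hstep2 : (Real.log (θ/u) - c) * (2*u) ≤ 2 * Real.sqrt (θ/u) * (2*u) :=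
        mul_le_mul_of_nonneg_right (by linarith) (by positivity)
      have hsq : 2 * Real.sqrt (θ/u) * (2*u) = Real.sqrt (16*θ*u) := by
        rw [show (16:ℝ)*θ*u = (4*u)^2 * (θ/u) by field_simp; ring]
        rw [Real.sqrt_mul (by positivity), Real.sqrt_sq (by positivity)]
        ring
      have hfin : Real.sqrt (16*θ*u) < A := by
        rw [Real.sqrt_lt' hA]
        have h1 : 16*θ*u < 16*θ*(A^2/(32*θ)) :=
          mul_lt_mul_of_pos_left (lt_of_lt_of_le huε hεA) (by positivity)
        have h2 : 16*θ*(A^2/(32*θ)) = A^2/2 := by field_simp; ring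
        nlinarith [sq_nonneg A]
      rw [← hsq] at hfin
      linarith [hstep1, hstep2, hfin]
  have hmaxIoo : IsMaxOn g (Set.Ioo 0 θ) θp := by
    intro u hu
    simp only [Set.mem_setOf_eq]
    rcases lt_or_ge u ε with huε | huε
    · exact le_trans (hsmall u hu.1 huε).le hApθ
    rcases le_or_gt u b with hub | hub
    · exact hmaxC ⟨huε, hub⟩
    · -- u > b : numerator negative
      have hD : 0 < 1 / u - 1 / θ := by
        have := one_div_lt_one_div_of_lt hu.1 hu.2
        linarith
      have hN : Real.log (θ / u) - c < 0 := by
        have h1 : θ / u < Real.exp c := by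
          rw [div_lt_iff₀ hu.1]
          calc θ = Real.exp c * b := hbθexp
            _ < Real.exp c * u := mul_lt_mul_of_pos_left hub (Real.exp_pos c)
        have h2 := Real.log_lt_log (div_pos hθ hu.1) h1
        rw [Real.log_exp] at h2
        linarith
      have hgu : g u ≤ 0 := by
        rw [hgdef]
        exact (div_neg_of_neg_of_pos hN hD).le
      linarith [hApθ, hA]
  ------------------------------------------------------------------
  -- MINIMUM on (θ, ∞)
  ------------------------------------------------------------------
  have hgid : ∀ u : ℝ, θ < u → g u = (c + Real.log (u/θ)) * (u*θ/(u-θ)) := by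
    intro u hu
    have hu0 : 0 < u := hθ.trans hu
    have hne : u - θ ≠ 0 := by intro h; exact (ne_of_gt hu) (by linarith)
    have hlog : Real.log (θ/u) = - Real.log (u/θ) := by
      rw [show θ/u = (u/θ)⁻¹ by field_simp, Real.log_inv]
    rw [hgdef]
    simp only [hlog]
    rw [div_eq_iff (hden u hu0 (ne_of_gt hu))]
    field_simp
    ring
  have hgpos : ∀ u : ℝ, θ < u → 0 < g u := by
    intro u hu
    rw [hgid u hu]
    have hu0 : 0 < u := hθ.trans hu
    have h1 : 0 < Real.log (u/θ) := Real.log_pos (by rw [lt_div_iff₀ hθ]; linarith)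
    have h2 : 0 < u*θ/(u-θ) := div_pos (by positivity) (by linarith)
    positivity
  set B := g (2*θ) with hBdef
  have hB : 0 < B := hgpos (2*θ) (by linarith)
  clear_value B
  -- lower bound 1 : g u ≥ c θ² / (u - θ)
  have hlb1 : ∀ u : ℝ, θ < u → c * θ^2 / (u - θ) ≤ g u := by
    intro u hu
    rw [hgid u hu]
    have hu0 : 0 < u := hθ.trans hu
    have hL : 0 ≤ Real.log (u/θ) := Real.log_nonneg (by rw [le_div_iff₀ hθ]; linarith)
    have huθ : 0 < u - θ := by linarith
    have hX : (c + Real.log (u/θ)) * (u*θ/(u-θ)) * (u-θ) = (c + Real.log (u/θ)) * (u*θ) := by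
      rw [mul_assoc, div_mul_cancel₀ _ (ne_of_gt huθ)]
    rw [div_le_iff₀ huθ, hX]
    have k1 : 0 ≤ Real.log (u/θ) * (u*θ) := mul_nonneg hL (mul_pos hu0 hθ).le
    have k2 : c*θ*θ ≤ c*u*θ :=
      mul_le_mul_of_nonneg_right (mul_le_mul_of_nonneg_left hu.le hc.le) hθ.le
    nlinarith [k1, k2]
  -- lower bound 2 : g u ≥ θ log(u/θ)
  have hlb2 : ∀ u : ℝ, θ < u → θ * Real.log (u/θ) ≤ g u := by
    intro u hu
    rw [hgid u hu]
    have hu0 : 0 < u := hθ.trans hu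
    have hL : 0 ≤ Real.log (u/θ) := Real.log_nonneg (by rw [le_div_iff₀ hθ]; linarith)
    have huθ : 0 < u - θ := by linarith
    have hfac : θ ≤ u*θ/(u-θ) := by
      rw [le_div_iff₀ huθ]
      nlinarith
    calc θ * Real.log (u/θ) ≤ (u*θ/(u-θ)) * Real.log (u/θ) :=
          mul_le_mul_of_nonneg_right hfac hL
      _ ≤ (c + Real.log (u/θ)) * (u*θ/(u-θ)) := by
          have h2 : 0 < u*θ/(u-θ) := div_pos (by positivity) huθ
          nlinarith
  set δ := min θ (c*θ^2/B) with hδdef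
  have hδ0 : 0 < δ := lt_min hθ (by positivity)
  have hδθ : δ ≤ θ := min_le_left _ _
  have hδB : δ ≤ c*θ^2/B := min_le_right _ _
  set M := max (2*θ) (θ * Real.exp (B/θ)) with hMdef
  have h2θM : 2*θ ≤ M := le_max_left _ _
  have hMexp : θ * Real.exp (B/θ) ≤ M := le_max_right _ _
  clear_value δ M
  obtain ⟨θm, hθmC, hminC⟩ : ∃ x ∈ Set.Icc (θ+δ) M, IsMinOn g (Set.Icc (θ+δ) M) x := by
    apply isCompact_Icc.exists_isMinOn ⟨2*θ, by linarith, h2θM⟩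
    intro x hx
    have hx1 : θ < x := by linarith [hx.1]
    exact (hgc x (hθ.trans hx1) (ne_of_gt hx1)).continuousWithinAt
  have hθmIoi : θm ∈ Set.Ioi θ := by
    simp only [Set.mem_Ioi]
    linarith [hθmC.1]
  have h2θC : (2*θ) ∈ Set.Icc (θ+δ) M := ⟨by linarith, h2θM⟩
  have hminB : g θm ≤ B := by rw [hBdef]; exact hminC h2θC
  have hminIoi : IsMinOn g (Set.Ioi θ) θm := by
    intro u hu
    simp only [Set.mem_setOf_eq]
    have huθ : θ < u := hu
    rcases lt_or_ge u (θ+δ) with huδ | huδ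
    · have h1 : c*θ^2/δ ≤ c*θ^2/(u-θ) :=
        div_le_div_of_nonneg_left (by positivity) (by linarith) (by linarith)
      have h2 : B ≤ c*θ^2/δ := by
        rw [le_div_iff₀ hδ0]
        calc B * δ ≤ B * (c*θ^2/B) := mul_le_mul_of_nonneg_left hδB hB.le
          _ = c*θ^2 := by field_simp
      linarith [hlb1 u huθ]
    rcases le_or_gt u M with huM | huM
    · exact hminC ⟨huδ, huM⟩
    · have hM2 : θ * Real.exp (B/θ) < u := lt_of_le_of_lt hMexp huM
      have h1 : Real.exp (B/θ) < u/θ := by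
        rw [lt_div_iff₀ hθ]; linarith
      have h2 : B/θ < Real.log (u/θ) := by
        have h3 := Real.log_lt_log (Real.exp_pos _) h1
        rwa [Real.log_exp] at h3
      have h3 : B ≤ θ * Real.log (u/θ) := by
        rw [show B = θ * (B/θ) by field_simp]
        exact mul_le_mul_of_nonneg_left h2.le hθ.le
      linarith [hlb2 u huθ]
  ------------------------------------------------------------------
  -- PEELING
  ------------------------------------------------------------------
  refine ⟨θp, hθpIoo, θm, hθmIoi, hmaxIoo, hminIoi, ?_⟩
  intro m hm hev
  have hev' : Real.log (θ/m) - (1/m - 1/θ) * m > c := by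
    rw [hcdef, gt_iff_lt, div_lt_iff₀ hk0]
    linarith [hev]
  rcases lt_trichotomy m θ with hmθ | hmθ | hmθ
  · -- left branch
    left
    have hDm : 0 < 1/m - 1/θ := by
      have := one_div_lt_one_div_of_lt hm hmθ; linarith
    have hgm : m < g m := by
      rw [hgdef]
      show m < (Real.log (θ/m) - c) / (1/m - 1/θ)
      rw [lt_div_iff₀ hDm]
      linarith
    have hgp : m < g θp := lt_of_lt_of_le hgm (hmaxIoo ⟨hm, hmθ⟩)
    have hDp : 0 < 1/θp - 1/θ := by
      have := one_div_lt_one_div_of_lt hθpIoo.1 hθpIoo.2; linarith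
    rw [hgdef] at hgp
    have h1 : (1/θp - 1/θ) * m < Real.log (θ/θp) - c := by
      have h2 := (lt_div_iff₀ hDp).mp hgp
      linarith
    rw [gt_iff_lt, ← div_lt_iff₀' hk0, ← hcdef]
    linarith [h1]
  · -- m = θ : premise is false
    exfalso
    rw [hmθ] at hev'
    rw [div_self hθ.ne', Real.log_one, sub_self, zero_mul, sub_zero] at hev'
    linarith
  · -- right branch
    right
    have hDm : 1/m - 1/θ < 0 := by
      have := one_div_lt_one_div_of_lt hθ hmθ; linarith
    have hgm : g m < m := by
      rw [hgdef]
      show (Real.log (θ/m) - c) / (1/m - 1/θ) < m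
      rw [div_lt_iff_of_neg hDm]
      linarith
    have hgmm : g θm < m := lt_of_le_of_lt (hminIoi hmθ) hgm
    have hDmm : 1/θm - 1/θ < 0 := by
      have := one_div_lt_one_div_of_lt hθ hθmIoi; linarith
    rw [hgdef] at hgmm
    have h1 : (1/θm - 1/θ) * m < Real.log (θ/θm) - c := by
      have h2 := (div_lt_iff_of_neg hDmm).mp hgmm
      linarith
    rw [gt_iff_lt, ← div_lt_iff₀' hk0, ← hcdef]
    linarith [h1]
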